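/- arXiv:1206.4444 — 5 statements merged into one kernel-verified Lean document; each statement's English description precedes it below -/
import Mathlib

section
/- Every pair (A, B) of propositional formulae admits a generalized Craig interpolant; in particular, any quantifier-free formula equivalent to A^∃ ∧ B̄^∀, to A^∃, to B̄^∀, or to A^∃ ∨ B̄^∀ is a generalized Craig interpolant for (A, B). -/
/-- `f` mentions only variables in `W`: its value depends only on the
values the assignment takes on `W`. -/
def VarsSubset {V : Type} (f : (V → Bool) → Prop) (W : Set V) : Prop :=
  ∀ σ τ : V → Bool, (∀ v ∈ W, σ v = τ v) → (f σ ↔ f τ)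

/-- `A^∃`: existential projection of `A`, quantifying out the variables in `VA`. -/
def ExProj {V : Type} (VA : Set V) (A : (V → Bool) → Prop) (σ : V → Bool) : Prop :=
  ∃ σ' : V → Bool, (∀ v ∉ VA, σ' v = σ v) ∧ A σ'

/-- `B̄^∀ = ¬∃(VB) : B`. -/
def NegExProj {V : Type} (VB : Set V) (B : (V → Bool) → Prop) (σ : V → Bool) : Prop :=
  ¬ ∃ σ' : V → Bool, (∀ v ∉ VB, σ' v = σ v) ∧ B σ'

/-- `I` is a generalized Craig interpolant for `(A, B)`, where `VA`, `VB`, `VAB` are the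
variables local to `A`, local to `B`, and common to both, respectively. -/
def IsGCI {V : Type} (VA VB VAB : Set V) (A B I : (V → Bool) → Prop) : Prop :=
  VarsSubset I VAB ∧
  (∀ σ : V → Bool, ExProj VA A σ ∧ NegExProj VB B σ → I σ) ∧
  (∀ σ : V → Bool, I σ → ExProj VA A σ ∨ NegExProj VB B σ)

lemma exproj_mono {V : Type} {VA VAB : Set V} {A : (V → Bool) → Prop}
    (hAC : Disjoint VA VAB) (hA : VarsSubset A (VA ∪ VAB))
    {σ τ : V → Bool} (h : ∀ v ∈ VAB, σ v = τ v) :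
    ExProj VA A σ → ExProj VA A τ := by
  classical
  rintro ⟨σ', hσ', hAσ'⟩
  refine ⟨fun v => if v ∈ VA then σ' v else τ v, ?_, ?_⟩
  · intro v hv; simp [hv]
  · refine (hA σ' _ ?_).mp hAσ'
    intro v hv
    rcases hv with hv | hv
    · simp [hv]
    · have hvA : v ∉ VA := Set.disjoint_right.mp hAC hv
      simp [hvA, (hσ' v hvA).trans (h v hv)]

lemma exproj_vars {V : Type} {VA VAB : Set V} {A : (V → Bool) → Prop}
    (hAC : Disjoint VA VAB) (hA : VarsSubset A (VA ∪ VAB)) :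
    VarsSubset (ExProj VA A) VAB := by
  intro σ τ h
  exact ⟨exproj_mono hAC hA h, exproj_mono hAC hA fun v hv => (h v hv).symm⟩

lemma negexproj_vars {V : Type} {VB VAB : Set V} {B : (V → Bool) → Prop}
    (hBC : Disjoint VB VAB) (hB : VarsSubset B (VB ∪ VAB)) :
    VarsSubset (NegExProj VB B) VAB := by
  intro σ τ h
  have h2 := exproj_vars hBC hB σ τ h
  exact not_congr h2

theorem generalized_interpolants_exist {V : Type} (VA VB VAB : Set V)
    (A B : (V → Bool) → Prop)
    (hAB : Disjoint VA VB) (hAC : Disjoint VA VAB) (hBC : Disjoint VB VAB)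
    (hA : VarsSubset A (VA ∪ VAB)) (hB : VarsSubset B (VB ∪ VAB)) :
    IsGCI VA VB VAB A B (fun σ => ExProj VA A σ ∧ NegExProj VB B σ) ∧
    IsGCI VA VB VAB A B (ExProj VA A) ∧
    IsGCI VA VB VAB A B (NegExProj VB B) ∧
    IsGCI VA VB VAB A B (fun σ => ExProj VA A σ ∨ NegExProj VB B σ) := by
  have hEA := exproj_vars hAC hA
  have hEB := negexproj_vars hBC hB
  refine ⟨⟨?_, ?_, ?_⟩, ⟨hEA, ?_, ?_⟩, ⟨hEB, ?_, ?_⟩, ⟨?_, ?_, ?_⟩⟩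
  · intro σ τ h; exact and_congr (hEA σ τ h) (hEB σ τ h)
  · exact fun σ h => h
  · exact fun σ h => Or.inl h.1
  · exact fun σ h => h.1
  · exact fun σ h => Or.inl h
  · exact fun σ h => h.2
  · exact fun σ h => Or.inr h
  · intro σ τ h; exact or_congr (hEA σ τ h) (hEB σ τ h)
  · exact fun σ h => Or.inl h.1
  · exact fun σ h => h
end

section
/- Characterization of generalized Craig interpolants (Lemma on SSAT interpolants): Let S_{A,B} be a formula over V_{A,B} equivalent to ∃a₁,…,a_α,b₁,…,b_β : (A ∧ B). Then a propositional formula I is a generalized Craig interpolant for (A,B) if and only if Var(I) ⊆ V_{A,B}, A ∧ ¬S_{A,B} ∧ ¬I is unsatisfiable, and I ∧ B ∧ ¬S_{A,B} is unsatisfiable. -/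
theorem gci_characterization {V : Type} (VA VB VAB : Set V)
    (A B I SAB : (V → Bool) → Prop)
    (hAB : Disjoint VA VB) (hAC : Disjoint VA VAB) (hBC : Disjoint VB VAB)
    (hA : VarsSubset A (VA ∪ VAB)) (hB : VarsSubset B (VB ∪ VAB))
    (hSvars : VarsSubset SAB VAB)
    (hS : ∀ σ : V → Bool,
      SAB σ ↔ ∃ σ' : V → Bool, (∀ v ∉ VA ∪ VB, σ' v = σ v) ∧ A σ' ∧ B σ') :
    IsGCI VA VB VAB A B I ↔
      (VarsSubset I VAB ∧
       (¬ ∃ σ : V → Bool, A σ ∧ ¬ SAB σ ∧ ¬ I σ) ∧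
       (¬ ∃ σ : V → Bool, I σ ∧ B σ ∧ ¬ SAB σ)) := by
  classical
  have hAB' := Set.disjoint_left.mp hAB
  have hBC' := Set.disjoint_left.mp hBC
  have hAC' := Set.disjoint_left.mp hAC
  constructor
  · rintro ⟨hIv, h1, h2⟩
    refine ⟨hIv, ?_, ?_⟩
    · rintro ⟨σ, hAσ, hnS, hnI⟩
      apply hnI
      apply h1 σ
      refine ⟨⟨σ, fun v _ => rfl, hAσ⟩, ?_⟩
      rintro ⟨σ', hag, hBσ'⟩
      apply hnS
      rw [hS]
      refine ⟨σ', fun v hv => hag v (fun h => hv (Or.inr h)), ?_, hBσ'⟩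
      refine (hA σ' σ ?_).mpr hAσ
      intro v hv
      apply hag
      rcases hv with h | h
      · exact fun hvB => hAB' h hvB
      · exact fun hvB => hBC' hvB h
    · rintro ⟨σ, hIσ, hBσ, hnS⟩
      rcases h2 σ hIσ with ⟨σ', hag, hAσ'⟩ | hne
      · apply hnS
        rw [hS]
        refine ⟨σ', fun v hv => hag v (fun h => hv (Or.inl h)), hAσ', ?_⟩
        refine (hB σ' σ ?_).mpr hBσ
        intro v hv
        apply hag
        rcases hv with h | h
        · exact fun hvA => hAB' hvA h
        · exact fun hvA => hAC' hvA h
      · exact hne ⟨σ, fun v _ => rfl, hBσ⟩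
  · rintro ⟨hIv, hU1, hU2⟩
    refine ⟨hIv, ?_, ?_⟩
    · rintro σ ⟨⟨σ', hag, hAσ'⟩, hne⟩
      have hnS : ¬ SAB σ' := by
        intro hSσ'
        rcases (hS σ').mp hSσ' with ⟨τ, hagτ, hAτ, hBτ⟩
        apply hne
        refine ⟨fun v => if v ∈ VB then τ v else σ v, fun v hv => if_neg hv, ?_⟩
        refine (hB _ τ ?_).mpr hBτ
        intro v hv
        rcases hv with h | h
        · simp [h]
        · have h1 : v ∉ VB := fun hvB => hBC' hvB h
          have h2 : v ∉ VA := fun hvA => hAC' hvA h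
          simp only [if_neg h1]
          rw [← hag v h2, ← hagτ v (fun hu => hu.elim h2 h1)]
      have hIσ' : I σ' := by
        by_contra hnI
        exact hU1 ⟨σ', hAσ', hnS, hnI⟩
      refine (hIv σ σ' ?_).mpr hIσ'
      intro v hv
      exact (hag v (fun hvA => hAC' hvA hv)).symm
    · intro σ hIσ
      by_cases hne : NegExProj VB B σ
      · exact Or.inr hne
      · left
        simp only [NegExProj, not_not] at hne
        rcases hne with ⟨σ', hag, hBσ'⟩
        have hIσ' : I σ' := by
          refine (hIv σ' σ ?_).mpr hIσ
          intro v hv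
          exact hag v (fun hvB => hBC' hvB hv)
        have hSσ' : SAB σ' := by
          by_contra hnS
          exact hU2 ⟨σ', hIσ', hBσ', hnS⟩
        rcases (hS σ').mp hSσ' with ⟨τ, hagτ, hAτ, hBτ⟩
        refine ⟨fun v => if v ∈ VA then τ v else σ v, fun v hv => if_neg hv, ?_⟩
        refine (hA _ τ ?_).mpr hAτ
        intro v hv
        rcases hv with h | h
        · simp [h]
        · have h1 : v ∉ VA := fun hvA => hAC' hvA h
          have h2 : v ∉ VB := fun hvB => hBC' hvB h
          simp only [if_neg h1]
          rw [← hag v h2, ← hagτ v (fun hu => hu.elim h1 h2)]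
end

section
/- The valid-implication directions of the generalized-interpolant characterization: ⊨ (A^∃ ∧ B̄^∀) ⟹ I if and only if A ∧ ¬S_{A,B} ∧ ¬I is unsatisfiable, where S_{A,B} ≡ ∃(V_A ∪ V_B) : (A ∧ B), Var(I) ⊆ V_{A,B}, A^∃ = ∃V_A : A, B̄^∀ = ¬∃V_B : B. -/
theorem gci_first_direction {V : Type} (VA VB VAB : Set V)
    (A B I SAB : (V → Bool) → Prop)
    (hAB : Disjoint VA VB) (hAC : Disjoint VA VAB) (hBC : Disjoint VB VAB)
    (hA : VarsSubset A (VA ∪ VAB)) (hB : VarsSubset B (VB ∪ VAB))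
    (hI : VarsSubset I VAB)
    (hS : ∀ σ : V → Bool,
      SAB σ ↔ ∃ σ' : V → Bool, (∀ v ∉ VA ∪ VB, σ' v = σ v) ∧ A σ' ∧ B σ') :
    (∀ σ : V → Bool, ExProj VA A σ ∧ NegExProj VB B σ → I σ) ↔
      ¬ ∃ σ : V → Bool, A σ ∧ ¬ SAB σ ∧ ¬ I σ := by

  classical
  constructor
  · rintro h ⟨σ, hAσ, hSσ, hIσ⟩
    apply hIσ
    apply h σ
    refine ⟨⟨σ, fun _ _ => rfl, hAσ⟩, ?_⟩
    rintro ⟨σ', hagree, hBσ'⟩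
    apply hSσ
    rw [hS σ]
    refine ⟨σ', fun v hv => hagree v (fun h => hv (Or.inr h)), ?_, hBσ'⟩
    rw [hA σ' σ]
    · exact hAσ
    · intro v hv
      apply hagree
      intro hvB
      cases hv with
      | inl h => exact hAB.ne_of_mem h hvB rfl
      | inr h => exact hBC.ne_of_mem hvB h rfl
  · rintro h σ ⟨⟨σ', hagree, hAσ'⟩, hNB⟩
    have hIeq : I σ' ↔ I σ := by
      apply hI
      intro v hv
      exact hagree v (fun hvA => hAC.ne_of_mem hvA hv rfl)
    rw [← hIeq]
    by_contra hIσ'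
    apply h
    refine ⟨σ', hAσ', ?_, hIσ'⟩
    rw [hS σ']
    rintro ⟨τ, hτ, hAτ, hBτ⟩
    apply hNB
    refine ⟨fun v => if v ∈ VB then τ v else σ v, fun v hv => if_neg hv, ?_⟩
    rw [hB _ τ]
    · exact hBτ
    · intro v hv
      cases hv with
      | inl h => simp [h]
      | inr h =>
        have hvVB : v ∉ VB := fun hvB => hBC.ne_of_mem hvB h rfl
        have hvVA : v ∉ VA := fun hvA => hAC.ne_of_mem hvA h rfl
        simp only [if_neg hvVB]
        rw [← hagree v hvVA, hτ v (fun hh => hh.elim hvVA hvVB)]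
end

section
/- Dually: for I over the common variables V_{A,B}, ⊨ I ⟹ (A^∃ ∨ B̄^∀) if and only if I ∧ B ∧ ¬S_{A,B} is unsatisfiable, where S_{A,B} ≡ ∃(V_A ∪ V_B) : (A ∧ B). -/
theorem gci_second_direction {V : Type} (VA VB VAB : Set V)
    (A B I SAB : (V → Bool) → Prop)
    (hAB : Disjoint VA VB) (hAC : Disjoint VA VAB) (hBC : Disjoint VB VAB)
    (hA : VarsSubset A (VA ∪ VAB)) (hB : VarsSubset B (VB ∪ VAB))
    (hI : VarsSubset I VAB)
    (hS : ∀ σ : V → Bool,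
      SAB σ ↔ ∃ σ' : V → Bool, (∀ v ∉ VA ∪ VB, σ' v = σ v) ∧ A σ' ∧ B σ') :
    (∀ σ : V → Bool, I σ → ExProj VA A σ ∨ NegExProj VB B σ) ↔
      ¬ ∃ σ : V → Bool, I σ ∧ B σ ∧ ¬ SAB σ := by
  constructor
  · rintro h ⟨σ, hIσ, hBσ, hnS⟩
    rcases h σ hIσ with ⟨σ', hσ', hAσ'⟩ | hN
    · apply hnS
      rw [hS]
      refine ⟨σ', fun v hv => hσ' v (fun hvA => hv (Or.inl hvA)), hAσ', ?_⟩
      refine (hB σ' σ (fun v hv => hσ' v (fun hvA => ?_))).mpr hBσ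
      rcases hv with hv | hv
      · exact Set.disjoint_left.mp hAB hvA hv
      · exact Set.disjoint_left.mp hAC hvA hv
    · exact hN ⟨σ, fun v _ => rfl, hBσ⟩
  · intro h σ hIσ
    classical
    by_contra hcon
    push_neg at hcon
    obtain ⟨hnEx, hnN⟩ := hcon
    simp only [NegExProj, not_not] at hnN
    obtain ⟨σ', hσ', hBσ'⟩ := hnN
    have hIσ' : I σ' :=
      (hI σ' σ (fun v hv => hσ' v (Set.disjoint_right.mp hBC hv))).mpr hIσ
    have hSσ' : SAB σ' := by
      by_contra hnS
      exact h ⟨σ', hIσ', hBσ', hnS⟩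
    rw [hS] at hSσ'
    obtain ⟨τ, hτ, hAτ, hBτ⟩ := hSσ'
    apply hnEx
    refine ⟨fun v => if v ∈ VA then τ v else σ v, fun v hv => if_neg hv, ?_⟩
    refine (hA _ τ ?_).mpr hAτ
    intro v hv
    rcases hv with hvA | hvC
    · simp only [if_pos hvA]
    · have hvnA : v ∉ VA := Set.disjoint_right.mp hAC hvC
      have hvnB : v ∉ VB := Set.disjoint_right.mp hBC hvC
      have h1 : τ v = σ' v := hτ v (fun hh => hh.elim hvnA hvnB)
      have h2 : σ' v = σ v := hσ' v hvnB
      simp only [if_neg hvnA, h1, h2]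
end

section
/- Strong soundness invariant of S-resolution: if clause c^p is derivable by S-resolution from Q : φ with Q(c) = Q₁x₁…Qᵢxᵢ, then for every assignment τ of {x₁,…,xᵢ} that falsifies c (i.e., agrees with the unique falsifying assignment on Var(c)), Pr(Q_{i+1}x_{i+1}…Q_n x_n : φ[τ(x₁)/x₁]…[τ(xᵢ)/xᵢ]) = p. -/
/-- A quantifier in an SSAT prefix: existential or randomized with probability `p`. -/
inductive SQ where
  | ex : SQ
  | rand : ℝ → SQ

/-- Validity of a quantifier: randomized quantifiers carry a probability `0 < p < 1`. -/
def SQ.valid : SQ → Prop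
  | SQ.ex => True
  | SQ.rand p => 0 < p ∧ p < 1

open Classical in
/-- Maximum satisfaction probability of an SSAT formula, where `k` is the index of the
next variable to be bound and the matrix `φ` is a predicate on total assignments. -/
noncomputable def PrSSAT : List SQ → ℕ → ((ℕ → Bool) → Prop) → ℝ
  | [], _, φ => if ∀ σ, φ σ then 1 else 0
  | SQ.ex :: Q, k, φ =>
      max (PrSSAT Q (k + 1) (fun σ => φ (Function.update σ k true)))
          (PrSSAT Q (k + 1) (fun σ => φ (Function.update σ k false)))
  | SQ.rand p :: Q, k, φ =>
      p * PrSSAT Q (k + 1) (fun σ => φ (Function.update σ k true))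
      + (1 - p) * PrSSAT Q (k + 1) (fun σ => φ (Function.update σ k false))

/-- A (non-tautological) clause: each variable occurs at most once, with
`some true` a positive and `some false` a negative literal. -/
abbrev Clause := ℕ → Option Bool

/-- The clause `c` is satisfied by assignment `σ`. -/
def clauseSat (c : Clause) (σ : ℕ → Bool) : Prop :=
  ∃ j : ℕ, ∃ b : Bool, c j = some b ∧ σ j = b

/-- `σ` agrees with the (unique) falsifying assignment of `c` on the variables of `c`. -/
def Falsifies (σ : ℕ → Bool) (c : Clause) : Prop :=
  ∀ j : ℕ, ∀ b : Bool, c j = some b → σ j = !b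

/-- Satisfaction of a CNF, given as a list of clauses. -/
def cnfSat (φ : List Clause) (σ : ℕ → Bool) : Prop :=
  ∀ c ∈ φ, clauseSat c σ

/-- S-resolution: derivation of annotated clauses `c^p` from the SSAT formula `Q : φ`. -/
inductive SRes (Q : List SQ) (φ : List Clause) : Clause → ℝ → Prop
  /-- R1: an original clause of `φ` is derived with annotation `0`. -/
  | orig (c : Clause) (hc : c ∈ φ) : SRes Q φ c 0
  /-- R2: if every assignment consistent with the falsifying assignment of `c`
  satisfies `φ`, then `c` is derived with annotation `1`. -/
  | sat (c : Clause)
      (hvar : ∀ j : ℕ, ∀ b : Bool, c j = some b → j < Q.length)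
      (h : ∀ σ : ℕ → Bool, Falsifies σ c → cnfSat φ σ) :
      SRes Q φ c 1
  /-- R3: resolution on the quantifier-maximal variable `x`, combining annotations
  by `max` for existential `x` and by the weighted average for randomized `x`. -/
  | res (d₁ d₂ : Clause) (p₁ p₂ : ℝ) (x : ℕ) (q : SQ) (p : ℝ)
      (h₁ : SRes Q φ d₁ p₁) (h₂ : SRes Q φ d₂ p₂)
      (hx1 : d₁ x = some false) (hx2 : d₂ x = some true)
      (hq : Q[x]? = some q)
      (hmax : ∀ j : ℕ, j ≠ x → (d₁ j ≠ none ∨ d₂ j ≠ none) → j < x)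
      (hcompat : ∀ j : ℕ, j ≠ x → ∀ b : Bool, d₁ j = some b → d₂ j ≠ some (!b))
      (hp : p = match q with
        | SQ.ex => max p₁ p₂
        | SQ.rand px => px * p₁ + (1 - px) * p₂) :
      SRes Q φ (fun j => if j = x then none else (d₁ j <|> d₂ j)) p

/-! If the residual probability at level `x` equals `p` for every `τ` falsifying `c`, it equals
`p` at every lower level that still lies above all variables of `c`: each quantifier in between
combines two equal values into that value. For a resolvent on `x`, fixing `x` to `true` resp.
`false` falsifies the first resp. second premise, so by induction on the derivation the residual
probability at level `x` combines the premises' annotations exactly as rule R3 does. -/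

def SQ.combine : SQ → ℝ → ℝ → ℝ
  | SQ.ex, a, b => max a b
  | SQ.rand px, a, b => px * a + (1 - px) * b

@[simp]
lemma SQ.combine_self (q : SQ) (a : ℝ) : q.combine a a = a := by
  cases q
  · exact max_self a
  · simp only [SQ.combine]; ring

lemma PrSSAT_cons (q : SQ) (Q : List SQ) (k : ℕ) (φ : (ℕ → Bool) → Prop) :
    PrSSAT (q :: Q) k φ = q.combine (PrSSAT Q (k + 1) fun σ => φ (Function.update σ k true))
      (PrSSAT Q (k + 1) fun σ => φ (Function.update σ k false)) := by
  cases q <;> rfl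

lemma PrSSAT_of_forall (Q : List SQ) (k : ℕ) {φ : (ℕ → Bool) → Prop} (h : ∀ σ, φ σ) :
    PrSSAT Q k φ = 1 := by
  induction Q generalizing k φ with
  | nil => simp [PrSSAT, h]
  | cons q Q ih => rw [PrSSAT_cons, ih _ fun σ => h _, ih _ fun σ => h _, SQ.combine_self]

lemma PrSSAT_of_forall_not (Q : List SQ) (k : ℕ) {φ : (ℕ → Bool) → Prop} (h : ∀ σ, ¬φ σ) :
    PrSSAT Q k φ = 0 := by
  induction Q generalizing k φ with
  | nil => simp [PrSSAT, h]
  | cons q Q ih => rw [PrSSAT_cons, ih _ fun σ => h _, ih _ fun σ => h _, SQ.combine_self]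

/-- The value `Pr(Q_{i+1}x_{i+1}…Qₙxₙ : φ[τ(x₁)/x₁]…[τ(xᵢ)/xᵢ])`; variable `x_{j+1}` of the
paper is the index `j` here. -/
noncomputable def residualPr (Q : List SQ) (φ : List Clause) (i : ℕ) (τ : ℕ → Bool) : ℝ :=
  PrSSAT (Q.drop i) i fun σ => cnfSat φ fun j => if j < i then τ j else σ j

lemma ite_lt_update_eq (τ σ : ℕ → Bool) (i : ℕ) (b : Bool) :
    (fun j => if j < i then τ j else Function.update σ i b j) =
      fun j => if j < i + 1 then Function.update τ i b j else σ j := by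
  funext j
  simp only [Function.update_apply]
  split_ifs <;> first | rfl | omega

lemma residualPr_eq_combine {Q : List SQ} (φ : List Clause) {i : ℕ} (hi : i < Q.length)
    (τ : ℕ → Bool) :
    residualPr Q φ i τ = Q[i].combine (residualPr Q φ (i + 1) (Function.update τ i true))
      (residualPr Q φ (i + 1) (Function.update τ i false)) := by
  simp only [residualPr, List.drop_eq_getElem_cons hi, PrSSAT_cons, ite_lt_update_eq]

lemma Falsifies.update {τ : ℕ → Bool} {c d : Clause} {k : ℕ} {b : Bool} (hτ : Falsifies τ c)
    (hdc : ∀ j, j ≠ k → ∀ b', d j = some b' → c j = some b')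
    (hk : ∀ b', d k = some b' → b = !b') :
    Falsifies (Function.update τ k b) d := by
  intro j b' hj
  by_cases hjk : j = k
  · subst hjk
    simpa using hk b' hj
  · rw [Function.update_of_ne hjk]
    exact hτ j b' (hdc j hjk b' hj)

lemma residualPr_eq_of_le {Q : List SQ} {φ : List Clause} {c : Clause} {p : ℝ} {i x : ℕ}
    (hix : i ≤ x) (hxQ : x ≤ Q.length) (hlt : ∀ j b, c j = some b → j < i)
    (hx : ∀ τ, Falsifies τ c → residualPr Q φ x τ = p) :
    ∀ τ, Falsifies τ c → residualPr Q φ i τ = p := by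
  induction hix using Nat.decreasingInduction with
  | self => exact hx
  | of_succ k hkx ih =>
    intro τ hτ
    have hupd (b : Bool) : Falsifies (Function.update τ k b) c :=
      hτ.update (fun _ _ _ hj => hj) fun b' hb' => absurd (hlt k b' hb') k.lt_irrefl
    have hlt' (j b) (hj : c j = some b) : j < k + 1 := Nat.lt_succ_of_lt (hlt j b hj)
    rw [residualPr_eq_combine φ (by omega), ih hlt' _ (hupd true), ih hlt' _ (hupd false),
      SQ.combine_self]

/-- The conclusion of rule R3 of `SRes`. -/
def Clause.resolve (d₁ d₂ : Clause) (x : ℕ) : Clause :=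
  fun j => if j = x then none else (d₁ j <|> d₂ j)

namespace Clause

variable {d₁ d₂ : Clause} {x j : ℕ} {b : Bool}

lemma resolve_of_left (hj : j ≠ x) (h : d₁ j = some b) : d₁.resolve d₂ x j = some b := by
  simp [Clause.resolve, hj, h]

lemma resolve_of_right (hcompat : ∀ b', d₁ j = some b' → d₂ j ≠ some (!b')) (hj : j ≠ x)
    (h : d₂ j = some b) : d₁.resolve d₂ x j = some b := by
  cases h₁ : d₁ j with
  | none => simp [Clause.resolve, hj, h₁, h]
  | some b' =>
    have : b' = b := by cases b <;> cases b' <;> simp_all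
    simp [Clause.resolve, hj, h₁, this]

lemma resolve_lt (hmax : ∀ j, j ≠ x → (d₁ j ≠ none ∨ d₂ j ≠ none) → j < x)
    (h : d₁.resolve d₂ x j = some b) : j < x := by
  by_cases hj : j = x
  · simp [Clause.resolve, hj] at h
  · refine hmax j hj ?_
    by_contra! hnone
    simp [Clause.resolve, hnone] at h

end Clause

/-- The two conditions on `i` say that `Q(c) = Q₁x₁…Qᵢxᵢ`. -/
def SoundInvariant (Q : List SQ) (φ : List Clause) (c : Clause) (p : ℝ) : Prop :=
  ∀ i, (∀ j b, c j = some b → j < i) → (i = 0 ∨ ∃ b, c (i - 1) = some b) →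
    ∀ τ, Falsifies τ c → residualPr Q φ i τ = p

section SoundInvariant

variable {Q : List SQ} {φ : List Clause}

lemma soundInvariant_of_mem {c : Clause} (hc : c ∈ φ) : SoundInvariant Q φ c 0 := by
  intro i hlt _ τ hτ
  refine PrSSAT_of_forall_not _ _ fun σ hσ => ?_
  obtain ⟨j, b, hj, hσj⟩ := hσ c hc
  simp [hlt j b hj, hτ j b hj] at hσj

lemma soundInvariant_of_falsifies_imp {c : Clause} (h : ∀ σ, Falsifies σ c → cnfSat φ σ) :
    SoundInvariant Q φ c 1 := by
  intro i hlt _ τ hτ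
  refine PrSSAT_of_forall _ _ fun σ => h _ fun j b hj => ?_
  simpa [hlt j b hj] using hτ j b hj

lemma SoundInvariant.resolve {d₁ d₂ : Clause} {p₁ p₂ : ℝ} {x : ℕ} {q : SQ}
    (h₁ : SoundInvariant Q φ d₁ p₁) (h₂ : SoundInvariant Q φ d₂ p₂)
    (hx₁ : d₁ x = some false) (hx₂ : d₂ x = some true) (hq : Q[x]? = some q)
    (hmax : ∀ j, j ≠ x → (d₁ j ≠ none ∨ d₂ j ≠ none) → j < x)
    (hcompat : ∀ j, j ≠ x → ∀ b, d₁ j = some b → d₂ j ≠ some (!b)) :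
    SoundInvariant Q φ (d₁.resolve d₂ x) (q.combine p₁ p₂) := by
  obtain ⟨hxQ, rfl⟩ := List.getElem?_eq_some_iff.mp hq
  intro i hlt hlast
  have hix : i ≤ x := by
    rcases hlast with rfl | ⟨b, hb⟩
    · exact x.zero_le
    · have := Clause.resolve_lt hmax hb
      omega
  have hlt_succ {d : Clause} (hd : ∀ j, j ≠ x → d j ≠ none → j < x) (j b)
      (hj : d j = some b) : j < x + 1 := by
    rcases eq_or_ne j x with rfl | hjx
    · exact j.lt_succ_self
    · exact Nat.lt_succ_of_lt (hd j hjx (by simp [hj]))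
  refine residualPr_eq_of_le hix hxQ.le hlt fun τ hτ => ?_
  rw [residualPr_eq_combine φ hxQ,
    h₁ (x + 1) (hlt_succ fun j hj h => hmax j hj (.inl h)) (.inr ⟨false, hx₁⟩) _
      (hτ.update (fun j hj b => Clause.resolve_of_left hj) (by simp [hx₁])),
    h₂ (x + 1) (hlt_succ fun j hj h => hmax j hj (.inr h)) (.inr ⟨true, hx₂⟩) _
      (hτ.update (fun j hj b => Clause.resolve_of_right (hcompat j hj) hj) (by simp [hx₂]))]

end SoundInvariant

theorem SRes.soundInvariant {Q : List SQ} {φ : List Clause} {c : Clause} {p : ℝ}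
    (h : SRes Q φ c p) : SoundInvariant Q φ c p := by
  induction h with
  | orig c hc => exact soundInvariant_of_mem hc
  | sat c _ h => exact soundInvariant_of_falsifies_imp h
  | res d₁ d₂ p₁ p₂ x q p _ _ hx₁ hx₂ hq hmax hcompat hp ih₁ ih₂ =>
    obtain rfl : p = q.combine p₁ p₂ := by cases q <;> exact hp
    exact ih₁.resolve ih₂ hx₁ hx₂ hq hmax hcompat

theorem sres_sound_invariant_general (Q : List SQ) (φ : List Clause) (c : Clause) (p : ℝ) (i : ℕ)
    (hder : SRes Q φ c p)
    (hlt : ∀ j : ℕ, ∀ b : Bool, c j = some b → j < i)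
    (hlast : i = 0 ∨ ∃ b : Bool, c (i - 1) = some b) :
    ∀ τ : ℕ → Bool, Falsifies τ c →
      PrSSAT (Q.drop i) i
        (fun σ => cnfSat φ (fun j => if j < i then τ j else σ j)) = p :=
  hder.soundInvariant i hlt hlast

theorem sres_sound_invariant (Q : List SQ) (φ : List Clause) (c : Clause) (p : ℝ) (i : ℕ)
    (hQ : ∀ q ∈ Q, q.valid)
    (hvars : ∀ c' ∈ φ, ∀ j : ℕ, ∀ b : Bool, c' j = some b → j < Q.length)
    (hder : SRes Q φ c p)
    (hi : i ≤ Q.length)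
    (hlt : ∀ j : ℕ, ∀ b : Bool, c j = some b → j < i)
    (hlast : i = 0 ∨ ∃ b : Bool, c (i - 1) = some b) :
    ∀ τ : ℕ → Bool, Falsifies τ c →
      PrSSAT (Q.drop i) i
        (fun σ => cnfSat φ (fun j => if j < i then τ j else σ j)) = p :=
  sres_sound_invariant_general Q φ c p i hder hlt hlast
end
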